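/- Let X = ℓ²([0,1]) with orthonormal family {e_t : t ∈ (0,1]} and let h : [0,1] → X be h(t) = e_t (with h(0)=0). For every n ∈ ℕ and every tagged partition {(Iᵢ, tᵢ)}_{i≤m} of [0,1] in which each interval Iᵢ has length less than 1/n, one has ‖∑ᵢ h(tᵢ) λ(Iᵢ)‖ ≤ 1/√n. Consequently h is Henstock (indeed McShane) integrable with integral 0. -/

import Mathlib

open Set MeasureTheory

def IsIntervalPartition (n : ℕ) (a b : ℝ) (x : Fin (n + 1) → ℝ) : Prop :=
  Monotone x ∧ x 0 = a ∧ x (Fin.last n) = b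

def IsPerronTagged (n : ℕ) (x : Fin (n + 1) → ℝ) (t : Fin n → ℝ) : Prop :=
  ∀ i : Fin n, t i ∈ Set.Icc (x i.castSucc) (x i.succ)

def IsDeltaFine (δ : ℝ → ℝ) (n : ℕ) (x : Fin (n + 1) → ℝ) (t : Fin n → ℝ) : Prop :=
  ∀ i : Fin n, Set.Icc (x i.castSucc) (x i.succ) ⊆ Set.Icc (t i - δ (t i)) (t i + δ (t i))

noncomputable def riemannSum {X : Type*} [NormedAddCommGroup X] [NormedSpace ℝ X]
    (f : ℝ → X) (n : ℕ) (x : Fin (n + 1) → ℝ) (t : Fin n → ℝ) : X :=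
  ∑ i : Fin n, (x i.succ - x i.castSucc) • f (t i)

def HasHenstockIntegral {X : Type*} [NormedAddCommGroup X] [NormedSpace ℝ X]
    (f : ℝ → X) (a b : ℝ) (I : X) : Prop :=
  ∀ ε > (0 : ℝ), ∃ δ : ℝ → ℝ, (∀ s, 0 < δ s) ∧
    ∀ (n : ℕ) (x : Fin (n + 1) → ℝ) (t : Fin n → ℝ),
      IsIntervalPartition n a b x → IsPerronTagged n x t → IsDeltaFine δ n x t →
      ‖riemannSum f n x t - I‖ < ε

/-!
Expand `‖∑ᵢ Δᵢ h(tᵢ)‖²` as a double sum of inner products: by orthonormality only pairs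
with equal tags survive, so the square is at most `∑ᵢ Δᵢ wᵢ ≤ maxᵢ wᵢ`, where `wᵢ` is the
total length of the intervals tagged `tᵢ`. With distinct tags `wᵢ = Δᵢ < 1/n`. For a
`δ`-fine partition the intervals tagged `s` are non-overlapping and lie in `[s - δ, s + δ]`,
so `wᵢ ≤ 2δ`, and the constant gauge `δ = ε² / 4` gives Riemann sums of norm `< ε`.
-/

open Finset

theorem Fin.sum_univ_succ_sub_castSucc {M : Type*} [AddCommGroup M] {m : ℕ}
    (x : Fin (m + 1) → M) :
    ∑ i : Fin m, (x i.succ - x i.castSucc) = x (Fin.last m) - x 0 := by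
  cases m with
  | zero => simp
  | succ k =>
    rw [← Fin.succ_last, ← Fin.sum_Iic_sub (Fin.last k) x]
    exact (sum_subset (subset_univ _) (by simp [Fin.le_last])).symm

section Monotone

variable {m : ℕ} {x : Fin (m + 1) → ℝ}

theorem Monotone.succ_sub_castSucc_nonneg (hx : Monotone x) (i : Fin m) :
    0 ≤ x i.succ - x i.castSucc :=
  sub_nonneg.2 (hx i.castSucc_le_succ)

theorem Monotone.sum_succ_sub_castSucc_le (hx : Monotone x) {S : Finset (Fin m)} {a b : Fin m}
    (hab : a ≤ b) (hS : S ⊆ Finset.Icc a b) :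
    ∑ j ∈ S, (x j.succ - x j.castSucc) ≤ x b.succ - x a.castSucc :=
  (sum_le_sum_of_subset_of_nonneg hS fun j _ _ => hx.succ_sub_castSucc_nonneg j).trans_eq
    (Fin.sum_Icc_sub hab x)

end Monotone

theorem IsPerronTagged.mem_Icc {m : ℕ} {a b : ℝ} {x : Fin (m + 1) → ℝ} {t : Fin m → ℝ}
    (hx : IsIntervalPartition m a b x) (ht : IsPerronTagged m x t) (i : Fin m) :
    t i ∈ Set.Icc a b := by
  obtain ⟨hmono, hx0, hx1⟩ := hx
  exact ⟨hx0 ▸ (hmono (Fin.zero_le _)).trans (ht i).1,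
    (ht i).2.trans (hx1 ▸ hmono (Fin.le_last _))⟩

theorem IsDeltaFine.sum_filter_tag_eq_le {m : ℕ} {x : Fin (m + 1) → ℝ} {t : Fin m → ℝ}
    {δ : ℝ} (hx : Monotone x) (hfine : IsDeltaFine (fun _ => δ) m x t) (i : Fin m) :
    ∑ j with t j = t i, (x j.succ - x j.castSucc) ≤ 2 * δ := by
  set S := ({j | t j = t i} : Finset (Fin m))
  have hS : S.Nonempty := ⟨i, by simp [S]⟩
  have hta : t (S.min' hS) = t i := by simpa [S] using S.min'_mem hS
  have htb : t (S.max' hS) = t i := by simpa [S] using S.max'_mem hS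
  have hleft := hfine (S.min' hS) ⟨le_rfl, hx (S.min' hS).castSucc_le_succ⟩
  have hright := hfine (S.max' hS) ⟨hx (S.max' hS).castSucc_le_succ, le_rfl⟩
  rw [hta] at hleft
  rw [htb] at hright
  calc ∑ j ∈ S, (x j.succ - x j.castSucc)
      ≤ x (S.max' hS).succ - x (S.min' hS).castSucc :=
        hx.sum_succ_sub_castSucc_le (S.min'_le_max' hS) fun j hj =>
          Finset.mem_Icc.2 ⟨S.min'_le j hj, S.le_max' j hj⟩
    _ ≤ (t i + δ) - (t i - δ) := sub_le_sub hright.2 hleft.1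
    _ = 2 * δ := by ring

section InnerProductSpace

variable {X : Type*} [NormedAddCommGroup X] [InnerProductSpace ℝ X]

theorem inner_le_ite_of_orthonormal {α : Type*} [DecidableEq α] {A : Set α} {e : A → X}
    (he : Orthonormal ℝ e) {h : α → X} (hh : ∀ s (hs : s ∈ A), h s = e ⟨s, hs⟩) {s s' : α}
    (hs : s ∈ A ∨ h s = 0) (hs' : s' ∈ A ∨ h s' = 0) :
    inner ℝ (h s) (h s') ≤ if s = s' then 1 else 0 := by
  classical
  rcases hs with hs | hs
  · rcases hs' with hs' | hs'
    · rw [hh s hs, hh s' hs', orthonormal_iff_ite.1 he]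
      simp [Subtype.mk.injEq]
    · rw [hs', inner_zero_right]
      split_ifs <;> norm_num
  · rw [hs, inner_zero_left]
    split_ifs <;> norm_num

theorem norm_sq_sum_smul_le_of_inner_le_ite {ι α : Type*} [Fintype ι] [DecidableEq α]
    {u : ι → X} {t : ι → α} (hu : ∀ i j, inner ℝ (u i) (u j) ≤ if t i = t j then 1 else 0)
    {w : ι → ℝ} (hw : ∀ i, 0 ≤ w i) {c : ℝ} (hc : ∀ i, ∑ j with t j = t i, w j ≤ c) :
    ‖∑ i, w i • u i‖ ^ 2 ≤ c * ∑ i, w i := by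
  rw [← real_inner_self_eq_norm_sq, sum_inner, mul_comm, sum_mul]
  refine sum_le_sum fun i _ => ?_
  calc inner ℝ (w i • u i) (∑ j, w j • u j)
      = ∑ j, w i * w j * inner ℝ (u i) (u j) := by
        simp only [inner_sum, real_inner_smul_left, real_inner_smul_right]
        exact sum_congr rfl fun j _ => by ring
    _ ≤ ∑ j, w i * (if t j = t i then w j else 0) := by
        refine sum_le_sum fun j _ => ?_
        have := mul_le_mul_of_nonneg_left (hu i j) (mul_nonneg (hw i) (hw j))
        simp only [eq_comm (a := t j)]
        split_ifs at this ⊢ <;> linarith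
    _ = w i * ∑ j with t j = t i, w j := by rw [← mul_sum, sum_filter]
    _ ≤ w i * c := mul_le_mul_of_nonneg_left (hc i) (hw i)

theorem norm_sq_riemannSum_le {e : Set.Ioc (0 : ℝ) 1 → X} (he : Orthonormal ℝ e) {h : ℝ → X}
    (hh : ∀ s : ℝ, ∀ hs : s ∈ Set.Ioc (0 : ℝ) 1, h s = e ⟨s, hs⟩) (hh0 : h 0 = 0)
    {m : ℕ} {x : Fin (m + 1) → ℝ} {t : Fin m → ℝ}
    (hx : IsIntervalPartition m 0 1 x) (ht : IsPerronTagged m x t) {c : ℝ}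
    (hc : ∀ i : Fin m, ∑ j with t j = t i, (x j.succ - x j.castSucc) ≤ c) :
    ‖riemannSum h m x t‖ ^ 2 ≤ c := by
  have hA : ∀ i, t i ∈ Set.Ioc 0 1 ∨ h (t i) = 0 := fun i => by
    obtain ⟨h0, h1⟩ := ht.mem_Icc hx i
    rcases h0.eq_or_lt with h0 | h0
    · exact Or.inr (h0 ▸ hh0)
    · exact Or.inl ⟨h0, h1⟩
  calc ‖riemannSum h m x t‖ ^ 2 ≤ c * ∑ i : Fin m, (x i.succ - x i.castSucc) :=
        norm_sq_sum_smul_le_of_inner_le_ite (fun i j => inner_le_ite_of_orthonormal he hh (hA i)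
          (hA j)) hx.1.succ_sub_castSucc_nonneg hc
    _ = c := by rw [Fin.sum_univ_succ_sub_castSucc, hx.2.1, hx.2.2, sub_zero, mul_one]

end InnerProductSpace

theorem riemann_sum_estimate_and_henstock_integrable_general
    {X : Type*} [NormedAddCommGroup X] [InnerProductSpace ℝ X]
    (e : Set.Ioc (0 : ℝ) 1 → X) (he : Orthonormal ℝ e)
    (h : ℝ → X)
    (hh : ∀ s : ℝ, ∀ hs : s ∈ Set.Ioc (0 : ℝ) 1, h s = e ⟨s, hs⟩)
    (hh0 : h 0 = 0) :
    (∀ n : ℕ, 0 < n →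
      ∀ (m : ℕ) (x : Fin (m + 1) → ℝ) (t : Fin m → ℝ),
        IsIntervalPartition m 0 1 x → IsPerronTagged m x t → Function.Injective t →
        (∀ i : Fin m, x i.succ - x i.castSucc < 1 / (n : ℝ)) →
        ‖riemannSum h m x t‖ ≤ 1 / Real.sqrt n) ∧
    HasHenstockIntegral h 0 1 0 := by
  refine ⟨fun n _ m x t hx ht hinj hlen => ?_, fun ε hε => ?_⟩
  · have hsq : ‖riemannSum h m x t‖ ^ 2 ≤ 1 / n :=
      norm_sq_riemannSum_le he hh hh0 hx ht fun i => by
        simpa [hinj.eq_iff, filter_eq'] using (hlen i).le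
    rw [← Real.sqrt_one, ← Real.sqrt_div' _ (Nat.cast_nonneg n)]
    exact Real.le_sqrt_of_sq_le hsq
  · refine ⟨fun _ => ε ^ 2 / 4, fun _ => by positivity, fun m x t hx ht hfine => ?_⟩
    have hsq : ‖riemannSum h m x t‖ ^ 2 ≤ 2 * (ε ^ 2 / 4) :=
      norm_sq_riemannSum_le he hh hh0 hx ht (hfine.sum_filter_tag_eq_le hx.1)
    rw [sub_zero]
    exact lt_of_pow_lt_pow_left₀ 2 hε.le (by nlinarith)

/-- With `{e_t : t ∈ (0,1]}` an orthonormal family in a Hilbert space `X` (e.g.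
`X = ℓ²([0,1])`) and `h(t) = e_t` for `t ∈ (0,1]`, `h(0) = 0`: every tagged Perron
partition of `[0,1]` with (distinct tags and) all intervals of length `< 1/n` has Riemann
sum of norm at most `1/√n`; consequently `h` is Henstock integrable with integral `0`. -/
theorem riemann_sum_estimate_and_henstock_integrable
    {X : Type*} [NormedAddCommGroup X] [InnerProductSpace ℝ X] [CompleteSpace X]
    (e : Set.Ioc (0 : ℝ) 1 → X) (he : Orthonormal ℝ e)
    (h : ℝ → X)
    (hh : ∀ s : ℝ, ∀ hs : s ∈ Set.Ioc (0 : ℝ) 1, h s = e ⟨s, hs⟩)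
    (hh0 : h 0 = 0) :
    (∀ n : ℕ, 0 < n →
      ∀ (m : ℕ) (x : Fin (m + 1) → ℝ) (t : Fin m → ℝ),
        IsIntervalPartition m 0 1 x → IsPerronTagged m x t → Function.Injective t →
        (∀ i : Fin m, x i.succ - x i.castSucc < 1 / (n : ℝ)) →
        ‖riemannSum h m x t‖ ≤ 1 / Real.sqrt n) ∧
    HasHenstockIntegral h 0 1 0 :=
  riemann_sum_estimate_and_henstock_integrable_general e he h hh hh0
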